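/- arXiv:2605.22426 — 4 statements merged into one kernel-verified Lean document; each statement's English description precedes it below -/
import Mathlib

section
/- Let 𝒜 be a nonempty access structure on n nodes whose smallest access set has size τ ≥ 1. Then for every k ≥ 1 the optimal overhead β(k) = (m_opt(k) − k)/k (as a real number) satisfies β(k) ≤ n/k + (n − τ)/τ; consequently, for every ε > 0 there exists K such that β(k) ≤ (n − τ)/τ + ε for all k ≥ K (the overhead is bounded by (n−τ)/τ for large k). -/
/-- The optimal overhead `β(k) = (m_opt(k) - k)/k` of a linear monotone
erasure code satisfies `β(k) ≤ n/k + (n-τ)/τ` for all `k ≥ 1`, hence it is at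
most `(n-τ)/τ + ε` for all large enough `k`. -/
theorem stmt4 (n : ℕ) (𝒜 : Finset (Finset (Fin n)))
    (h𝒜 : 𝒜.Nonempty) (hne : ∀ A ∈ 𝒜, A.Nonempty)
    (τ : ℕ) (hτ : τ = (𝒜.image Finset.card).min' (h𝒜.image _))
    (mopt : ℕ → ℕ)
    (hmopt : ∀ k, mopt k = sInf {s : ℕ | ∃ m : Fin n → ℕ,
        (∀ A ∈ 𝒜, k ≤ ∑ i ∈ A, m i) ∧ s = ∑ i, m i})
    (β : ℕ → ℝ) (hβ : ∀ k, β k = ((mopt k : ℝ) - k) / k) :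
    (∀ k : ℕ, 1 ≤ k → β k ≤ (n : ℝ) / k + ((n : ℝ) - τ) / τ) ∧
    (∀ ε : ℝ, 0 < ε → ∃ K : ℕ, ∀ k : ℕ, K ≤ k → β k ≤ ((n : ℝ) - τ) / τ + ε) := by
  -- τ ≥ 1
  have hτmem : τ ∈ 𝒜.image Finset.card := hτ ▸ Finset.min'_mem _ _
  obtain ⟨A₀, hA₀, hA₀c⟩ := Finset.mem_image.mp hτmem
  have hτ1 : 1 ≤ τ := by
    rw [← hA₀c]
    exact Finset.card_pos.mpr (hne _ hA₀)
  have hτle : ∀ A ∈ 𝒜, τ ≤ A.card := by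
    intro A hA
    rw [hτ]
    exact Finset.min'_le _ _ (Finset.mem_image_of_mem _ hA)
  -- main bound
  have main : ∀ k : ℕ, 1 ≤ k → β k ≤ (n : ℝ) / k + ((n : ℝ) - τ) / τ := by
    intro k hk
    -- feasible assignment m i = k/τ + 1
    have hmem : n * (k / τ + 1) ∈ {s : ℕ | ∃ m : Fin n → ℕ,
        (∀ A ∈ 𝒜, k ≤ ∑ i ∈ A, m i) ∧ s = ∑ i, m i} := by
      refine ⟨fun _ => k / τ + 1, fun A hA => ?_, ?_⟩
      · rw [Finset.sum_const, smul_eq_mul]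
        calc k ≤ τ * (k / τ + 1) := by
                have h1 := Nat.div_add_mod k τ
                have h2 : k % τ < τ := Nat.mod_lt _ (by omega)
                nlinarith
          _ ≤ A.card * (k / τ + 1) := Nat.mul_le_mul_right _ (hτle A hA)
      · rw [Finset.sum_const, Finset.card_univ, Fintype.card_fin, smul_eq_mul]
    have hle : mopt k ≤ n * (k / τ + 1) := (hmopt k) ▸ Nat.sInf_le hmem
    have hleR : (mopt k : ℝ) ≤ n * ((k : ℝ) / τ + 1) := by
      calc (mopt k : ℝ) ≤ (n : ℝ) * ((k / τ : ℕ) + 1) := by exact_mod_cast hle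
        _ ≤ n * ((k : ℝ) / τ + 1) := by
            have := Nat.cast_div_le (m := k) (n := τ) (α := ℝ)
            have hn0 : (0:ℝ) ≤ n := Nat.cast_nonneg n
            nlinarith
    have hk0 : (0:ℝ) < k := by exact_mod_cast hk
    have hτ0 : (0:ℝ) < τ := by exact_mod_cast hτ1
    rw [hβ, div_le_iff₀ hk0]
    have key : (n : ℝ) * ((k : ℝ) / τ + 1) - k = ((n:ℝ)/k + ((n:ℝ) - τ)/τ) * k := by
      field_simp
      ring
    linarith [key]
  refine ⟨main, fun ε hε => ?_⟩
  obtain ⟨K', hK'⟩ := exists_nat_gt ((n : ℝ) / ε)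
  refine ⟨max K' 1, fun k hk => ?_⟩
  have hk1 : 1 ≤ k := le_trans (le_max_right _ _) hk
  have hkK : (K' : ℝ) ≤ k := by exact_mod_cast le_trans (le_max_left _ _) hk
  have hk0 : (0:ℝ) < k := by exact_mod_cast hk1
  have hnk : (n : ℝ) / k ≤ ε := by
    rw [div_le_iff₀ hk0]
    have : (n : ℝ) / ε < k := lt_of_lt_of_le hK' hkK
    have h : (n:ℝ) < k * ε := (div_lt_iff₀ hε).mp this
    linarith [mul_comm (k:ℝ) ε]
  have := main k hk1
  linarith
end

section
/- Fix integers r ≥ t ≥ 1 and a nondecreasing vector c : {1,…,r} → ℚ with c_i ≥ 1 for all i. Let s* be the smallest s ∈ {r−t+1,…,r−1} such that (s−r+t)·c_{s+1} ≥ Σ_{i=1}^{s} c_i, with s* = r if no such s exists. Define γ* ∈ ℝ^r by γ*_i = 1/(s*−r+t) for i ≤ s* and γ*_i = 0 for i > s*. Then (a) γ* is feasible, i.e., γ* ≥ 0 and Σ_{j ∈ J} γ*_j ≥ 1 for every J ⊆ {1,…,r} with |J| = t, and (b) γ* is optimal: for every feasible γ ∈ ℝ^r (γ ≥ 0 and Σ_{j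 ∈ J} γ_j ≥ 1 for every t-element set J ⊆ {1,…,r}) one has Σ_{i=1}^r γ*_i c_i ≤ Σ_{i=1}^r γ_i c_i. -/
/-- The selection condition `(s-r+t)·c_{s+1} ≥ Σ_{i=1}^s c_i` (indices 1-based). -/
def SelCond (r t : ℕ) (c : ℕ → ℚ) (s : ℕ) : Prop :=
  (↑(s + t - r) : ℚ) * c (s + 1) ≥ ∑ i ∈ Finset.Icc 1 s, c i

/-- A vector `γ` is feasible if it is nonnegative on `{1,…,r}` and sums to at
least `1` over every `t`-element subset of `{1,…,r}`. -/
def Feasible (r t : ℕ) (γ : ℕ → ℝ) : Prop :=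
  (∀ i ∈ Finset.Icc 1 r, 0 ≤ γ i) ∧
  ∀ J ⊆ Finset.Icc 1 r, J.card = t → 1 ≤ ∑ j ∈ J, γ j

/-! Every `t`-subset of `{1,…,r}` meets `{1,…,s*}` in at least `K = s* + t - r` points, so `γ*`
is feasible, with value `C / K` where `C = c₁ + ⋯ + c_{s*}`. The minimality of `s*` gives
`K cᵢ ≤ C` for `i ≤ s*`, and the selection condition at `s*` gives `C ≤ K cᵢ` for `i > s*`.
Hence `xᵢ = K cᵢ / C` for `i ≤ s*` and `xᵢ = 1` for `i > s*` lies in the hypersimplex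
`{0 ≤ x ≤ 1, ∑ x = t}` and satisfies `(C / K) x ≤ c`. A linear functional on the hypersimplex
is bounded below by its value on some `t`-set, so every feasible `γ` has
`∑ γᵢ cᵢ ≥ (C / K) ∑ γᵢ xᵢ ≥ C / K`. -/

open Finset

theorem exists_card_eq_sum_le_sum_mul {ι 𝕜 : Type*} [DecidableEq ι] [Field 𝕜] [LinearOrder 𝕜]
    [IsStrictOrderedRing 𝕜] {A : Finset ι} {k : ℕ} {x : ι → 𝕜} (δ : ι → 𝕜)
    (hx0 : ∀ i ∈ A, 0 ≤ x i) (hx1 : ∀ i ∈ A, x i ≤ 1) (hsum : ∑ i ∈ A, x i = k) :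
    ∃ J ⊆ A, #J = k ∧ ∑ i ∈ J, δ i ≤ ∑ i ∈ A, δ i * x i := by
  have hk : k ≤ #A := by
    have := A.sum_le_card_nsmul x 1 hx1
    rw [hsum, nsmul_one] at this
    exact_mod_cast this
  obtain ⟨J, hJ, hJmin⟩ := (A.powersetCard k).exists_min_image (fun J => ∑ i ∈ J, δ i)
    (powersetCard_nonempty.2 hk)
  obtain ⟨hJA, hJk⟩ := mem_powersetCard.1 hJ
  have hswap : ∀ i ∈ J, ∀ j ∈ A \ J, δ i ≤ δ j := by
    intro i hi j hj
    obtain ⟨hjA, hjJ⟩ := mem_sdiff.1 hj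
    have hj' : j ∉ J.erase i := fun h => hjJ (mem_of_mem_erase h)
    have := hJmin (insert j (J.erase i)) <| mem_powersetCard.2
      ⟨insert_subset hjA ((erase_subset i J).trans hJA), by
        rw [card_insert_of_notMem hj', card_erase_of_mem hi, ← hJk]
        have := card_pos.2 ⟨i, hi⟩
        omega⟩
    rw [sum_insert hj', sum_erase_eq_sub hi] at this
    linarith
  obtain ⟨m, hJm, hmA⟩ : ∃ m, (∀ i ∈ J, δ i ≤ m) ∧ ∀ j ∈ A \ J, m ≤ δ j := by
    rcases J.eq_empty_or_nonempty with rfl | hJne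
    · rcases A.eq_empty_or_nonempty with rfl | hAne
      · exact ⟨0, by simp⟩
      · exact ⟨A.inf' hAne δ, by simp, fun j hj => inf'_le δ (mem_sdiff.1 hj).1⟩
    · exact ⟨J.sup' hJne δ, fun i hi => le_sup' δ hi,
        fun j hj => sup'_le hJne δ fun i hi => hswap i hi j hj⟩
  -- `m` separates `J` from `A \ J`; as `∑ x = #J`, the mass `x` moves across `m` at no loss.
  refine ⟨J, hJA, hJk, ?_⟩
  have hin : m * ∑ i ∈ J, (x i - 1) ≤ ∑ i ∈ J, δ i * x i - ∑ i ∈ J, δ i := by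
    rw [mul_sum, ← sum_sub_distrib]
    exact sum_le_sum fun i hi => by nlinarith [hJm i hi, hx1 i (hJA hi)]
  have hout : m * ∑ i ∈ A \ J, x i ≤ ∑ i ∈ A \ J, δ i * x i := by
    rw [mul_sum]
    exact sum_le_sum fun j hj => mul_le_mul_of_nonneg_right (hmA j hj) (hx0 j (mem_sdiff.1 hj).1)
  have hbal : m * ∑ i ∈ J, (x i - 1) + m * ∑ i ∈ A \ J, x i = 0 := by
    rw [sum_sub_distrib, sum_const, hJk, nsmul_one, ← hsum, ← sum_sdiff hJA]
    ring
  rw [← sum_sdiff hJA]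
  linarith

theorem sum_Icc_ite_le {M : Type*} [AddCommMonoid M] {s r : ℕ} (hsr : s ≤ r) (f g : ℕ → M) :
    ∑ i ∈ Icc 1 r, (if i ≤ s then f i else g i) = ∑ i ∈ Icc 1 s, f i + ∑ i ∈ Icc (s + 1) r, g i := by
  rw [sum_ite]
  congr 2 <;> ext i <;> simp only [mem_filter, mem_Icc] <;> omega

theorem feasible_ite {r t s K : ℕ} (hK : 0 < K) (hKt : K + (r - s) ≤ t) :
    Feasible r t (fun i => if i ≤ s then 1 / (K : ℝ) else 0) := by
  refine ⟨fun i _ => by positivity, fun J hJ hJt => ?_⟩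
  have hhigh : #(J.filter (¬ · ≤ s)) ≤ r - s := by
    have hsub : J.filter (¬ · ≤ s) ⊆ Icc (s + 1) r := fun i hi => by
      have := mem_Icc.1 (hJ (mem_filter.1 hi).1)
      simp only [mem_filter, mem_Icc] at hi ⊢
      omega
    simpa using card_le_card hsub
  have hlow : K ≤ #(J.filter (· ≤ s)) := by
    have := card_filter_add_card_filter_not (s := J) (· ≤ s)
    omega
  rw [sum_ite, sum_const_zero, add_zero, sum_const, nsmul_eq_mul, mul_one_div,
    le_div_iff₀ (by exact_mod_cast hK), one_mul]
  exact_mod_cast hlow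

theorem div_le_sum_mul_of_feasible {r t s K : ℕ} (hK : 0 < K) (hsr : s ≤ r) (hKt : K + (r - s) = t)
    {c γ : ℕ → ℝ} (hc : ∀ i ∈ Icc 1 s, 0 ≤ c i) (hC : 0 < ∑ i ∈ Icc 1 s, c i)
    (hlow : ∀ i ∈ Icc 1 s, K * c i ≤ ∑ j ∈ Icc 1 s, c j)
    (hhigh : ∀ i ∈ Icc (s + 1) r, ∑ j ∈ Icc 1 s, c j ≤ K * c i) (hγ : Feasible r t γ) :
    (∑ i ∈ Icc 1 s, c i) / K ≤ ∑ i ∈ Icc 1 r, γ i * c i := by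
  set C := ∑ i ∈ Icc 1 s, c i
  have hK' : (0 : ℝ) < K := by exact_mod_cast hK
  -- `x` lies in the hypersimplex of `t`-sets and `(C / K) • x ≤ c`: an LP dual certificate.
  set x : ℕ → ℝ := fun i => if i ≤ s then K * c i / C else 1
  have hx0 : ∀ i ∈ Icc 1 r, 0 ≤ x i := fun i hi => by
    by_cases h : i ≤ s
    · simp only [x, if_pos h]
      exact div_nonneg (mul_nonneg hK'.le (hc i (mem_Icc.2 ⟨(mem_Icc.1 hi).1, h⟩))) hC.le
    · simp [x, if_neg h]
  have hx1 : ∀ i ∈ Icc 1 r, x i ≤ 1 := fun i hi => by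
    by_cases h : i ≤ s
    · simp only [x, if_pos h]
      exact (div_le_one hC).2 (hlow i (mem_Icc.2 ⟨(mem_Icc.1 hi).1, h⟩))
    · simp [x, if_neg h]
  have hxsum : ∑ i ∈ Icc 1 r, x i = t := by
    rw [sum_Icc_ite_le hsr, ← sum_div, ← mul_sum, mul_div_assoc, div_self hC.ne', mul_one,
      sum_const, Nat.card_Icc, nsmul_one, ← hKt]
    push_cast [show r + 1 - (s + 1) = r - s by omega]
    ring
  have hxc : ∀ i ∈ Icc 1 r, C / K * x i ≤ c i := fun i hi => by
    by_cases h : i ≤ s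
    · simp only [x, if_pos h]
      exact (by field_simp : C / K * (K * c i / C) = c i).le
    · simp only [x, if_neg h, mul_one]
      rw [div_le_iff₀ hK', mul_comm]
      exact hhigh i (mem_Icc.2 ⟨by omega, (mem_Icc.1 hi).2⟩)
  obtain ⟨J, hJ, hJt, hJx⟩ := exists_card_eq_sum_le_sum_mul γ hx0 hx1 hxsum
  calc C / K ≤ C / K * ∑ i ∈ Icc 1 r, γ i * x i :=
        le_mul_of_one_le_right (by positivity) ((hγ.2 J hJ hJt).trans hJx)
    _ = ∑ i ∈ Icc 1 r, γ i * (C / K * x i) := by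
        rw [mul_sum]; exact sum_congr rfl fun i _ => by ring
    _ ≤ ∑ i ∈ Icc 1 r, γ i * c i :=
        sum_le_sum fun i hi => mul_le_mul_of_nonneg_left (hxc i hi) (hγ.1 i hi)

theorem bounds_of_least_or_default {r t s : ℕ} {P : ℕ → Prop} (ht : 1 ≤ t) (htr : t ≤ r)
    (hleast : (∃ s', r - t + 1 ≤ s' ∧ s' ≤ r - 1 ∧ P s') →
      (r - t + 1 ≤ s ∧ s ≤ r - 1 ∧ P s) ∧ ∀ s', r - t + 1 ≤ s' → s' ≤ r - 1 → P s' → s ≤ s')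
    (hnone : (¬ ∃ s', r - t + 1 ≤ s' ∧ s' ≤ r - 1 ∧ P s') → s = r) :
    r - t + 1 ≤ s ∧ s ≤ r ∧ (s < r → P s) ∧ (r - t + 1 < s → ¬ P (s - 1)) := by
  by_cases hex : ∃ s', r - t + 1 ≤ s' ∧ s' ≤ r - 1 ∧ P s'
  · obtain ⟨⟨hlo, hhi, hP⟩, hmin⟩ := hleast hex
    exact ⟨hlo, by omega, fun _ => hP, fun hlt hP' => by
      have := hmin (s - 1) (by omega) (by omega) hP'
      omega⟩
  · obtain rfl := hnone hex
    exact ⟨by omega, le_rfl, fun h => absurd h (lt_irrefl s), fun hlt hP =>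
      hex ⟨s - 1, by omega, le_rfl, hP⟩⟩

theorem mul_le_sum_Icc_of_not_selCond {r t s : ℕ} {c : ℕ → ℚ} (htr : t ≤ r) (hs : r - t + 1 ≤ s)
    (hnsel : r - t + 1 < s → ¬ SelCond r t c (s - 1)) (hc : ∀ i ∈ Icc 1 s, 0 ≤ c i)
    (hmono : MonotoneOn c (Icc 1 s)) :
    ∀ i ∈ Icc 1 s, ((s + t - r : ℕ) : ℚ) * c i ≤ ∑ j ∈ Icc 1 s, c j := by
  obtain ⟨s, rfl⟩ : ∃ s', s = s' + 1 := ⟨s - 1, by omega⟩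
  have htop : ∑ j ∈ Icc 1 (s + 1), c j = ∑ j ∈ Icc 1 s, c j + c (s + 1) :=
    sum_Icc_succ_top (by omega) c
  have hlast : ((s + 1 + t - r : ℕ) : ℚ) * c (s + 1) ≤ ∑ j ∈ Icc 1 (s + 1), c j := by
    rcases hs.eq_or_lt with heq | hlt
    · rw [show s + 1 + t - r = 1 by omega, Nat.cast_one, one_mul]
      exact single_le_sum hc (right_mem_Icc.2 (by omega))
    · have := not_le.1 (hnsel hlt)
      rw [Nat.add_sub_cancel, show s + t - r = (s + 1 + t - r) - 1 by omega,
        Nat.cast_sub (by omega), Nat.cast_one] at this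
      rw [htop]
      linarith
  intro i hi
  exact (mul_le_mul_of_nonneg_left (hmono hi (right_mem_Icc.2 (by omega)) (mem_Icc.1 hi).2)
    (Nat.cast_nonneg _)).trans hlast

theorem sum_Icc_le_mul_of_selCond {r t s : ℕ} {c : ℕ → ℚ} (hsel : s < r → SelCond r t c s)
    (hmono : MonotoneOn c (Icc 1 r)) :
    ∀ i ∈ Icc (s + 1) r, ∑ j ∈ Icc 1 s, c j ≤ ((s + t - r : ℕ) : ℚ) * c i := by
  intro i hi
  obtain ⟨hsi, hir⟩ := mem_Icc.1 hi
  exact (hsel (by omega)).trans (mul_le_mul_of_nonneg_left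
    (hmono (mem_Icc.2 ⟨by omega, by omega⟩) (mem_Icc.2 ⟨by omega, hir⟩) hsi) (Nat.cast_nonneg _))

/-- Optimality of the solution `γ*` with `γ*_i = 1/(s*-r+t)` for `i ≤ s*` and
`γ*_i = 0` for `i > s*`, where `s*` is the smallest `s ∈ {r-t+1,…,r-1}`
satisfying the selection condition (or `r` if none exists): `γ*` is feasible
and minimizes `Σ γ_i c_i` among all feasible `γ`. -/
theorem stmt5 (r t : ℕ) (ht : 1 ≤ t) (htr : t ≤ r) (c : ℕ → ℚ)
    (hmono : ∀ i j, 1 ≤ i → i ≤ j → j ≤ r → c i ≤ c j)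
    (hc1 : ∀ i, 1 ≤ i → i ≤ r → 1 ≤ c i)
    (sstar : ℕ)
    (hleast : (∃ s, r - t + 1 ≤ s ∧ s ≤ r - 1 ∧ SelCond r t c s) →
      (r - t + 1 ≤ sstar ∧ sstar ≤ r - 1 ∧ SelCond r t c sstar) ∧
      ∀ s, r - t + 1 ≤ s → s ≤ r - 1 → SelCond r t c s → sstar ≤ s)
    (hnone : (¬ ∃ s, r - t + 1 ≤ s ∧ s ≤ r - 1 ∧ SelCond r t c s) → sstar = r)
    (γstar : ℕ → ℝ)
    (hγstar : ∀ i, γstar i =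
      if i ≤ sstar then 1 / ((sstar + t - r : ℕ) : ℝ) else 0) :
    Feasible r t γstar ∧
    ∀ γ : ℕ → ℝ, Feasible r t γ →
      ∑ i ∈ Finset.Icc 1 r, γstar i * (c i : ℝ) ≤
        ∑ i ∈ Finset.Icc 1 r, γ i * (c i : ℝ) := by
  obtain ⟨hs_lo, hs_hi, hsel, hnsel⟩ := bounds_of_least_or_default ht htr hleast hnone
  have hmono' : MonotoneOn c (Icc 1 r) := fun i hi j hj hij =>
    hmono i j (mem_Icc.1 hi).1 hij (mem_Icc.1 hj).2
  have hc_pos : ∀ i ∈ Icc 1 sstar, (0 : ℚ) < c i := fun i hi =>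
    zero_lt_one.trans_le (hc1 i (mem_Icc.1 hi).1 ((mem_Icc.1 hi).2.trans hs_hi))
  have hlow := mul_le_sum_Icc_of_not_selCond htr hs_lo hnsel (fun i hi => (hc_pos i hi).le)
    (hmono'.mono (Icc_subset_Icc_right hs_hi))
  have hhigh := sum_Icc_le_mul_of_selCond hsel hmono'
  obtain rfl := funext hγstar
  refine ⟨feasible_ite (by omega) (by omega), fun γ hγ => ?_⟩
  simp only [ite_mul, zero_mul]
  rw [sum_Icc_ite_le hs_hi, sum_const_zero, add_zero, ← mul_sum, one_div_mul_eq_div]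
  refine div_le_sum_mul_of_feasible (by omega) hs_hi (by omega)
    (fun i hi => by exact_mod_cast (hc_pos i hi).le)
    (sum_pos (fun i hi => by exact_mod_cast hc_pos i hi) (nonempty_Icc.2 (by omega)))
    (fun i hi => by exact_mod_cast hlow i hi) (fun i hi => by exact_mod_cast hhigh i hi) hγ
end

section
/- Fix integers r ≥ t ≥ 1 and a nondecreasing vector c : {1,…,r} → ℚ. If s satisfies r−t+1 ≤ s ≤ r−1 and (s−r+t)·c_{s+1} ≥ Σ_{i=1}^{s} c_i, then every s' with s < s' ≤ r−1 also satisfies (s'−r+t)·c_{s'+1} ≥ Σ_{i=1}^{s'} c_i. (In the paper: if the selection condition c_{s+1} ≥ (1/(s−r+t)) Σ_{i=1}^{s} c_i holds for some s < r, then it also holds for any s' > s.) -/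
lemma stmt6_step (r t : ℕ) (ht : 1 ≤ t) (htr : t ≤ r) (c : ℕ → ℚ)
    (hmono : ∀ i j, 1 ≤ i → i ≤ j → j ≤ r → c i ≤ c j)
    (n : ℕ) (hn1 : r - t + 1 ≤ n) (hn2 : n + 1 ≤ r - 1)
    (h : (↑(n + t - r) : ℚ) * c (n + 1) ≥ ∑ i ∈ Finset.Icc 1 n, c i) :
    (↑(n + 1 + t - r) : ℚ) * c (n + 1 + 1) ≥ ∑ i ∈ Finset.Icc 1 (n + 1), c i := by
  have hc : c (n + 1) ≤ c (n + 2) := hmono (n + 1) (n + 2) (by omega) (by omega) (by omega)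
  have hnt : n + 1 + t - r = (n + t - r) + 1 := by omega
  have hpos : (0 : ℚ) ≤ (↑(n + t - r) : ℚ) := Nat.cast_nonneg _
  rw [Finset.sum_Icc_succ_top (by omega : 1 ≤ n + 1), hnt]
  push_cast
  calc ∑ i ∈ Finset.Icc 1 n, c i + c (n + 1)
      ≤ (↑(n + t - r) : ℚ) * c (n + 1) + c (n + 1) := by linarith
    _ ≤ (↑(n + t - r) : ℚ) * c (n + 2) + c (n + 2) := by nlinarith
    _ = ((↑(n + t - r) : ℚ) + 1) * c (n + 1 + 1) := by ring_nf

/-- If the selection condition `(s-r+t)·c_{s+1} ≥ Σ_{i=1}^s c_i` holds for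
some `s ∈ {r-t+1,…,r-1}` and `c` is nondecreasing, then it also holds for
every `s'` with `s < s' ≤ r-1`. -/
theorem stmt6 (r t : ℕ) (ht : 1 ≤ t) (htr : t ≤ r) (c : ℕ → ℚ)
    (hmono : ∀ i j, 1 ≤ i → i ≤ j → j ≤ r → c i ≤ c j)
    (s : ℕ) (hs1 : r - t + 1 ≤ s) (hs2 : s ≤ r - 1)
    (hcond : (↑(s + t - r) : ℚ) * c (s + 1) ≥ ∑ i ∈ Finset.Icc 1 s, c i)
    (s' : ℕ) (hs' : s < s') (hs'2 : s' ≤ r - 1) :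
    (↑(s' + t - r) : ℚ) * c (s' + 1) ≥ ∑ i ∈ Finset.Icc 1 s', c i := by
  have key : ∀ m, ∀ s'', s'' = s + m → s'' ≤ r - 1 →
      (↑(s'' + t - r) : ℚ) * c (s'' + 1) ≥ ∑ i ∈ Finset.Icc 1 s'', c i := by
    intro m
    induction m with
    | zero => intro s'' h1 _; subst h1; simpa using hcond
    | succ k ih =>
      intro s'' h1 h2
      subst h1
      exact stmt6_step r t ht htr c hmono (s + k) (by omega) (by omega)
        (ih (s + k) rfl (by omega))
  exact key (s' - s) s' (by omega) hs'2
end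

section
/- Let P be a finite set and 𝒬 a nonempty family of subsets of P satisfying consistency with respect to the canonical fail-prone system ℱ = {P \ Q : Q ∈ 𝒬} (for all F ∈ ℱ and Q₁, Q₂ ∈ 𝒬, Q₁ ∩ Q₂ ⊄ F). Then every quorum is a reliable set: for every Q ∈ 𝒬 and every F ∈ ℱ there exists a kernel K of 𝒬 with K ⊆ Q \ F. -/
/-!
For `F = Q'ᶜ` the set `Q \ F` is `Q ∩ Q'`, and consistency with `F = Q₁ᶜ` says exactly that
`Q ∩ Q'` meets every quorum `Q₁`. Among the finitely many subsets of `Q ∩ Q'` meeting every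
quorum, an inclusion-minimal one is a kernel.
-/

/-- `K` is a kernel of the quorum system `𝒬`: it intersects every quorum and
is minimal with this property. -/
def IsKernel {α : Type*} [DecidableEq α] (𝒬 : Finset (Finset α)) (K : Finset α) : Prop :=
  (∀ Q ∈ 𝒬, (K ∩ Q).Nonempty) ∧ ∀ K' ⊂ K, ∃ Q ∈ 𝒬, K' ∩ Q = ∅

section Kernel

variable {α : Type*} [DecidableEq α] (𝒬 : Finset (Finset α))

lemma isKernel_iff_minimal (K : Finset α) :
    IsKernel 𝒬 K ↔ Minimal (fun S : Finset α ↦ ∀ Q ∈ 𝒬, (S ∩ Q).Nonempty) K := by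
  simp only [IsKernel, minimal_iff_forall_lt, not_forall, Finset.not_nonempty_iff_eq_empty,
    exists_prop]

lemma exists_isKernel_subset {S : Finset α} (hS : ∀ Q ∈ 𝒬, (S ∩ Q).Nonempty) :
    ∃ K, IsKernel 𝒬 K ∧ K ⊆ S := by
  obtain ⟨K, hKS, hK⟩ :=
    exists_minimal_le_of_wellFoundedLT (fun S : Finset α ↦ ∀ Q ∈ 𝒬, (S ∩ Q).Nonempty) S hS
  exact ⟨K, (isKernel_iff_minimal 𝒬 K).2 hK, hKS⟩

end Kernel

lemma inter_inter_nonempty_of_consistent {α : Type*} [Fintype α] [DecidableEq α]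
    {𝒬 : Finset (Finset α)}
    (hcons : ∀ F ∈ 𝒬.image (·ᶜ), ∀ Q₁ ∈ 𝒬, ∀ Q₂ ∈ 𝒬, ¬ (Q₁ ∩ Q₂ ⊆ F))
    {Q₁ Q₂ Q₃ : Finset α} (h₁ : Q₁ ∈ 𝒬) (h₂ : Q₂ ∈ 𝒬) (h₃ : Q₃ ∈ 𝒬) :
    (Q₁ ∩ Q₂ ∩ Q₃).Nonempty := by
  have := hcons Q₃ᶜ (Finset.mem_image_of_mem _ h₃) Q₁ h₁ Q₂ h₂
  rwa [Finset.subset_compl_iff_disjoint_right, Finset.not_disjoint_iff_nonempty_inter] at this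

theorem stmt8_general {α : Type*} [Fintype α] [DecidableEq α]
    (𝒬 : Finset (Finset α))
    (hcons : ∀ F ∈ 𝒬.image (·ᶜ), ∀ Q₁ ∈ 𝒬, ∀ Q₂ ∈ 𝒬, ¬ (Q₁ ∩ Q₂ ⊆ F)) :
    ∀ Q ∈ 𝒬, ∀ F ∈ 𝒬.image (·ᶜ), ∃ K, IsKernel 𝒬 K ∧ K ⊆ Q \ F := by
  intro Q hQ F hF
  obtain ⟨Q', hQ', rfl⟩ := Finset.mem_image.mp hF
  rw [sdiff_compl]
  exact exists_isKernel_subset 𝒬 fun Q₁ hQ₁ ↦ inter_inter_nonempty_of_consistent hcons hQ hQ' hQ₁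

/-- If a quorum system satisfies consistency with respect to its canonical
fail-prone system `ℱ = {P \ Q : Q ∈ 𝒬}`, then every quorum is a reliable set:
for every quorum `Q` and every fail-prone set `F` there is a kernel contained
in `Q \ F`. -/
theorem stmt8 {α : Type*} [Fintype α] [DecidableEq α]
    (𝒬 : Finset (Finset α)) (h𝒬 : 𝒬.Nonempty)
    (hcons : ∀ F ∈ 𝒬.image (·ᶜ), ∀ Q₁ ∈ 𝒬, ∀ Q₂ ∈ 𝒬, ¬ (Q₁ ∩ Q₂ ⊆ F)) :
    ∀ Q ∈ 𝒬, ∀ F ∈ 𝒬.image (·ᶜ), ∃ K, IsKernel 𝒬 K ∧ K ⊆ Q \ F :=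
  stmt8_general 𝒬 hcons
end
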